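/- Let δ = e₁ ∧ e₂ ∧ e₃ ∧ e₄ be the standard generator of ⋀⁴ℂ⁴ and let β_Pf be the symmetric bilinear form on ⋀²ℂ⁴ determined by ω ∧ η = β_Pf(ω, η) • δ. Suppose the linear map A : ℂ² → ⋀²ℂ⁴ is not ample with respect to β_Pf and w ∈ ℂ⁴ is nonzero. Then there exists a linear map B : ℂ² → ℂ⁴ such that the linear map x ↦ A(x) + w ∧ B(x) is ample with respect to β_Pf. -/

import Mathlib

open ExteriorAlgebra

/-- A linear map `A : E → W` is ample with respect to a bilinear form `β` on `W` if the
restriction of `β` to the range of `A` is either identically zero or nondegenerate. -/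
def IsAmple {E W : Type*} [AddCommGroup E] [Module ℂ E] [AddCommGroup W] [Module ℂ W]
    (β : W →ₗ[ℂ] W →ₗ[ℂ] ℂ) (A : E →ₗ[ℂ] W) : Prop :=
  (∀ w ∈ LinearMap.range A, ∀ w' ∈ LinearMap.range A, β w w' = 0) ∨
  (∀ w ∈ LinearMap.range A, w ≠ 0 → ∃ w' ∈ LinearMap.range A, β w w' ≠ 0)

/-- The standard generator `δ = e₁ ∧ e₂ ∧ e₃ ∧ e₄` of `⋀⁴ℂ⁴`. -/
noncomputable def delta4 : ExteriorAlgebra ℂ (Fin 4 → ℂ) :=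
  ι ℂ (Pi.single 0 1) * ι ℂ (Pi.single 1 1) * ι ℂ (Pi.single 2 1) * ι ℂ (Pi.single 3 1)

/-!
On the two-dimensional range of `A` the Pfaffian pairing is nonzero but degenerate, so the range
is spanned by a radical vector `r = A x₀` and an anisotropic vector `v = A z`. Taking
`B x = ψ(x) • t • u` with `ψ x₀ = 1`, `ψ z = 0` replaces `r` by `r + t • w ∧ u` and leaves `v`
fixed; the Gram determinant of the new range becomes
`t * (2 β(r, w ∧ u) β(v, v) - β(v, w ∧ u)² t)`, which is nonzero for some `t` once
`β(v, w ∧ u) ≠ 0`. Such a `u` exists because `v ∧ v ≠ 0`, while a 2-vector annihilated by all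
`w ∧ u` has square zero.
-/

namespace ExteriorAlgebra

variable {R M : Type*} [CommRing R] [AddCommGroup M] [Module R M]

theorem ι_mul_ι_anticomm (a b : M) : ι R a * ι R b = -(ι R b * ι R a) :=
  eq_neg_of_add_eq_zero_left (ι_add_mul_swap a b)

theorem exteriorPower_two_eq : ⋀[R]^2 M = LinearMap.range (ι R) * LinearMap.range (ι R) :=
  pow_two _

theorem ι_mul_ι_mem_exteriorPower_two (a b : M) : ι R a * ι R b ∈ ⋀[R]^2 M := by
  rw [exteriorPower_two_eq]
  exact Submodule.mul_mem_mul (LinearMap.mem_range_self _ a) (LinearMap.mem_range_self _ b)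

theorem exteriorPower_two_induction_on {P : ExteriorAlgebra R M → Prop} {x : ExteriorAlgebra R M}
    (hx : x ∈ ⋀[R]^2 M) (ι_mul_ι : ∀ a b : M, P (ι R a * ι R b))
    (add : ∀ x y, P x → P y → P (x + y)) : P x := by
  rw [exteriorPower_two_eq] at hx
  refine Submodule.mul_induction_on hx ?_ add
  rintro _ ⟨a, rfl⟩ _ ⟨b, rfl⟩
  exact ι_mul_ι a b

theorem ι_mul_ι_mul_ι_comm (a b c : M) : ι R a * ι R b * ι R c = ι R c * (ι R a * ι R b) := by
  rw [mul_assoc, ι_mul_ι_anticomm b c, mul_neg, ← mul_assoc, ι_mul_ι_anticomm a c, neg_mul,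
    neg_neg, mul_assoc]

theorem mul_ι_comm_of_mem_exteriorPower_two {x : ExteriorAlgebra R M} (hx : x ∈ ⋀[R]^2 M)
    (c : M) : x * ι R c = ι R c * x :=
  exteriorPower_two_induction_on (P := fun x => x * ι R c = ι R c * x) hx
    (fun a b => ι_mul_ι_mul_ι_comm a b c)
    (fun x y hx hy => by rw [add_mul, mul_add, hx, hy])

theorem commute_of_mem_exteriorPower_two {x y : ExteriorAlgebra R M} (hx : x ∈ ⋀[R]^2 M)
    (hy : y ∈ ⋀[R]^2 M) : Commute x y :=
  exteriorPower_two_induction_on (P := Commute x) hy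
    (fun a b => by
      rw [Commute, SemiconjBy, ← mul_assoc, mul_ι_comm_of_mem_exteriorPower_two hx a, mul_assoc,
        mul_ι_comm_of_mem_exteriorPower_two hx b, ← mul_assoc])
    (fun _ _ => Commute.add_right)

theorem ι_mul_ι_mul_ι_mul_ι_eq_zero (u a b : M) : ι R u * ι R a * (ι R u * ι R b) = 0 := by
  rw [← mul_assoc, mul_assoc (ι R u), ι_mul_ι_anticomm a u, mul_neg, ← mul_assoc, ι_sq_zero]
  simp

open CliffordAlgebra (contractLeft)

theorem contractLeft_ι_mul_ι (φ : Module.Dual R M) (a b : M) :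
    contractLeft φ (ι R a * ι R b) = φ a • ι R b - φ b • ι R a := by
  rw [CliffordAlgebra.contractLeft_ι_mul, CliffordAlgebra.contractLeft_ι, ← Algebra.commutes,
    ← Algebra.smul_def]

theorem exists_contractLeft_eq_ι_of_mem_exteriorPower_two (φ : Module.Dual R M)
    {x : ExteriorAlgebra R M} (hx : x ∈ ⋀[R]^2 M) : ∃ u : M, contractLeft φ x = ι R u :=
  exteriorPower_two_induction_on (P := fun x => ∃ u : M, contractLeft φ x = ι R u) hx
    (fun a b => ⟨φ a • b - φ b • a, by simp [contractLeft_ι_mul_ι]⟩)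
    (fun x y ⟨u, hu⟩ ⟨v, hv⟩ => ⟨u + v, by rw [map_add, hu, hv, map_add]⟩)

theorem contractLeft_mul_of_mem_exteriorPower_two (φ : Module.Dual R M) {x : ExteriorAlgebra R M}
    (hx : x ∈ ⋀[R]^2 M) (y : ExteriorAlgebra R M) :
    contractLeft φ (x * y) = contractLeft φ x * y + x * contractLeft φ y :=
  exteriorPower_two_induction_on
    (P := fun x => contractLeft φ (x * y) = contractLeft φ x * y + x * contractLeft φ y) hx
    (fun a b => by
      rw [mul_assoc, CliffordAlgebra.contractLeft_ι_mul, CliffordAlgebra.contractLeft_ι_mul,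
        contractLeft_ι_mul_ι]
      simp only [mul_sub, sub_mul, smul_mul_assoc, mul_smul_comm, mul_assoc]
      abel)
    (fun x x' hx hx' => by simp only [map_add, add_mul, hx, hx']; abel)

theorem mul_self_eq_zero_of_forall_mul_ι_mul_ι_eq_zero {φ : Module.Dual R M} {w : M}
    (hφ : φ w = 1) {ω : ExteriorAlgebra R M} (hω : ω ∈ ⋀[R]^2 M)
    (H : ∀ b : M, ω * (ι R w * ι R b) = 0) : ω * ω = 0 := by
  have contract_ι_mul : ∀ x, contractLeft φ (ι R w * x) = x - ι R w * contractLeft φ x := by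
    intro x
    rw [CliffordAlgebra.contractLeft_ι_mul, hφ, one_smul]
  obtain ⟨u, hu⟩ := exists_contractLeft_eq_ι_of_mem_exteriorPower_two φ hω
  -- With `ω = ω₁ + w ∧ u` and `φ ⌋ ω₁ = 0`, the hypothesis forces `ω₁ ∧ b = φ b • w ∧ ω₁`,
  -- so `ω₁` annihilates every 2-vector.
  set ω₁ := ω - ι R w * ι R u with hω₁
  have hω₁_mem : ω₁ ∈ ⋀[R]^2 M := Submodule.sub_mem _ hω (ι_mul_ι_mem_exteriorPower_two w u)
  have hω₁_contract : contractLeft φ ω₁ = 0 := by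
    rw [hω₁, ← hu, ← contract_ι_mul, CliffordAlgebra.contractLeft_contractLeft]
  have hω₁_mul_ι : ∀ b, ω₁ * ι R b = φ b • (ι R w * ω₁) := by
    intro b
    have hw : ι R w * (ω₁ * ι R b) = 0 := by
      rw [← mul_assoc, ← mul_ι_comm_of_mem_exteriorPower_two hω₁_mem w, mul_assoc, hω₁, sub_mul,
        H b, ι_mul_ι_mul_ι_mul_ι_eq_zero, sub_zero]
    have h := contract_ι_mul (ω₁ * ι R b)
    rw [hw, map_zero, contractLeft_mul_of_mem_exteriorPower_two φ hω₁_mem, hω₁_contract,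
      zero_mul, zero_add, CliffordAlgebra.contractLeft_ι, ← Algebra.commutes, ← Algebra.smul_def,
      mul_smul_comm] at h
    exact (sub_eq_zero.mp h.symm)
  have hω₁_mul : ∀ a b, ω₁ * (ι R a * ι R b) = 0 := by
    intro a b
    rw [← mul_assoc, hω₁_mul_ι, smul_mul_assoc, mul_assoc, hω₁_mul_ι, mul_smul_comm, ← mul_assoc,
      ι_sq_zero, zero_mul, smul_zero, smul_zero]
  have hω₁_sq : ω₁ * ω₁ = 0 :=
    exteriorPower_two_induction_on (P := fun y => ω₁ * y = 0) hω₁_mem hω₁_mul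
      (fun x y hx hy => by rw [mul_add, hx, hy, add_zero])
  have hω : ω = ω₁ + ι R w * ι R u := (sub_add_cancel _ _).symm
  rw [hω, add_mul, mul_add, mul_add, hω₁_sq, hω₁_mul,
    ← (commute_of_mem_exteriorPower_two hω₁_mem (ι_mul_ι_mem_exteriorPower_two w u)).eq,
    hω₁_mul, ι_mul_ι_mul_ι_mul_ι_eq_zero]
  simp

end ExteriorAlgebra

noncomputable def topDegreeDet : ∀ n : ℕ, (Fin 4 → ℂ) [⋀^Fin n]→ₗ[ℂ] ℂ
  | 4 => Matrix.detRowAlternating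
  | _ => 0

theorem liftAlternating_topDegreeDet_delta4 : liftAlternating topDegreeDet delta4 = 1 := by
  rw [delta4, mul_assoc, mul_assoc, liftAlternating_ι_mul, liftAlternating_ι_mul,
    liftAlternating_ι_mul, liftAlternating_ι]
  simp only [topDegreeDet, AlternatingMap.curryLeft_apply_apply]
  have h : Matrix.of ![(Pi.single 0 1 : Fin 4 → ℂ), Pi.single 1 1, Pi.single 2 1, Pi.single 3 1]
      = 1 := by
    ext i j
    fin_cases i <;> fin_cases j <;> simp
  calc Matrix.detRowAlternating ![(Pi.single 0 1 : Fin 4 → ℂ), Pi.single 1 1, Pi.single 2 1,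
        Pi.single 3 1]
      = Matrix.det (1 : Matrix (Fin 4) (Fin 4) ℂ) := congrArg Matrix.det h
    _ = 1 := Matrix.det_one

theorem delta4_ne_zero : delta4 ≠ 0 := by
  intro h
  simpa [h] using liftAlternating_topDegreeDet_delta4

def IsPfaffPairing
    (β : ExteriorAlgebra ℂ (Fin 4 → ℂ) →ₗ[ℂ] ExteriorAlgebra ℂ (Fin 4 → ℂ) →ₗ[ℂ] ℂ) : Prop :=
  ∀ ω η : ExteriorAlgebra ℂ (Fin 4 → ℂ),
    ω ∈ ⋀[ℂ]^2 (Fin 4 → ℂ) → η ∈ ⋀[ℂ]^2 (Fin 4 → ℂ) → ω * η = β ω η • delta4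

namespace IsPfaffPairing

variable {β : ExteriorAlgebra ℂ (Fin 4 → ℂ) →ₗ[ℂ] ExteriorAlgebra ℂ (Fin 4 → ℂ) →ₗ[ℂ] ℂ}
  {ω η : ExteriorAlgebra ℂ (Fin 4 → ℂ)}

theorem apply_eq_of_mul_eq (hβ : IsPfaffPairing β) (hω : ω ∈ ⋀[ℂ]^2 (Fin 4 → ℂ))
    (hη : η ∈ ⋀[ℂ]^2 (Fin 4 → ℂ)) {c : ℂ} (h : ω * η = c • delta4) : β ω η = c :=
  smul_left_injective ℂ delta4_ne_zero ((hβ ω η hω hη).symm.trans h)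

theorem apply_comm (hβ : IsPfaffPairing β) (hω : ω ∈ ⋀[ℂ]^2 (Fin 4 → ℂ))
    (hη : η ∈ ⋀[ℂ]^2 (Fin 4 → ℂ)) : β ω η = β η ω :=
  hβ.apply_eq_of_mul_eq hω hη <| by
    rw [(commute_of_mem_exteriorPower_two hω hη).eq, hβ η ω hη hω]

theorem apply_ι_mul_ι_self (hβ : IsPfaffPairing β) (w u : Fin 4 → ℂ) :
    β (ι ℂ w * ι ℂ u) (ι ℂ w * ι ℂ u) = 0 :=
  hβ.apply_eq_of_mul_eq (ι_mul_ι_mem_exteriorPower_two w u) (ι_mul_ι_mem_exteriorPower_two w u)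
    (by rw [ι_mul_ι_mul_ι_mul_ι_eq_zero, zero_smul])

theorem exists_apply_ι_mul_ι_ne_zero (hβ : IsPfaffPairing β) {w : Fin 4 → ℂ} (hw : w ≠ 0)
    (hω : ω ∈ ⋀[ℂ]^2 (Fin 4 → ℂ)) (hωω : β ω ω ≠ 0) : ∃ u, β ω (ι ℂ w * ι ℂ u) ≠ 0 := by
  obtain ⟨φ, hφ⟩ := Module.Projective.exists_dual_eq_one ℂ hw
  by_contra! H
  refine hωω (hβ.apply_eq_of_mul_eq hω hω ?_)
  rw [zero_smul]
  refine mul_self_eq_zero_of_forall_mul_ι_mul_ι_eq_zero hφ hω fun u => ?_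
  rw [hβ _ _ hω (ι_mul_ι_mem_exteriorPower_two w u), H u, zero_smul]

end IsPfaffPairing

section IsAmple

variable {E W : Type*} [AddCommGroup E] [Module ℂ E] [AddCommGroup W] [Module ℂ W]
  {β : W →ₗ[ℂ] W →ₗ[ℂ] ℂ} {A : E →ₗ[ℂ] W}

theorem exists_radical_anisotropic_of_not_isAmple
    (hsymm : ∀ x y, β (A x) (A y) = β (A y) (A x)) (hA : ¬ IsAmple β A) :
    ∃ x₀ z, A x₀ ≠ 0 ∧ (∀ y, β (A x₀) (A y) = 0) ∧ β (A z) (A z) ≠ 0 := by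
  rw [IsAmple, not_or] at hA
  push Not at hA
  obtain ⟨⟨_, ⟨x, rfl⟩, _, ⟨y, rfl⟩, hxy⟩, ⟨_, ⟨x₀, rfl⟩, hx₀, hrad⟩⟩ := hA
  obtain ⟨z, hz⟩ : ∃ z, β (A z) (A z) ≠ 0 := by
    by_contra! hiso
    apply hxy
    have hpol := hiso (x + y)
    simp only [map_add, LinearMap.add_apply, hiso x, hiso y, hsymm y x] at hpol
    linear_combination hpol / 2
  exact ⟨x₀, z, hx₀, fun y => hrad _ ⟨y, rfl⟩, hz⟩

theorem linearIndependent_of_radical_anisotropic {x₀ z : E} (hx₀ : A x₀ ≠ 0)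
    (hrad : ∀ y, β (A x₀) (A y) = 0) (hz : β (A z) (A z) ≠ 0) :
    LinearIndependent ℂ ![x₀, z] := by
  rw [LinearIndependent.pair_iff]
  intro s t hst
  have ht : t = 0 := by
    have h := congrArg (fun x => β (A x) (A z)) hst
    simp only [map_add, map_smul, LinearMap.add_apply, LinearMap.smul_apply, smul_eq_mul, hrad,
      map_zero, LinearMap.zero_apply, mul_zero, zero_add] at h
    exact (mul_eq_zero.mp h).resolve_right hz
  subst ht
  refine ⟨?_, rfl⟩
  rw [zero_smul, add_zero] at hst
  exact (smul_eq_zero.mp hst).resolve_right (fun h => hx₀ (by rw [h, map_zero]))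

theorem isAmple_of_gram_det_ne_zero (b : Module.Basis (Fin 2) ℂ E)
    (h : β (A (b 0)) (A (b 0)) * β (A (b 1)) (A (b 1))
      - β (A (b 0)) (A (b 1)) * β (A (b 1)) (A (b 0)) ≠ 0) : IsAmple β A := by
  right
  rintro _ ⟨x, rfl⟩ hx
  by_contra! H
  have hx_eq := (b.sum_repr x).symm
  rw [Fin.sum_univ_two] at hx_eq
  have h0 := H _ ⟨b 0, rfl⟩
  have h1 := H _ ⟨b 1, rfl⟩
  rw [hx_eq] at h0 h1 hx
  simp only [map_add, map_smul, LinearMap.add_apply, LinearMap.smul_apply, smul_eq_mul] at h0 h1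
  have hc0 : b.repr x 0 * (β (A (b 0)) (A (b 0)) * β (A (b 1)) (A (b 1))
      - β (A (b 0)) (A (b 1)) * β (A (b 1)) (A (b 0))) = 0 := by
    linear_combination β (A (b 1)) (A (b 1)) * h0 - β (A (b 1)) (A (b 0)) * h1
  have hc1 : b.repr x 1 * (β (A (b 0)) (A (b 0)) * β (A (b 1)) (A (b 1))
      - β (A (b 0)) (A (b 1)) * β (A (b 1)) (A (b 0))) = 0 := by
    linear_combination β (A (b 0)) (A (b 0)) * h1 - β (A (b 0)) (A (b 1)) * h0
  simp [(mul_eq_zero.mp hc0).resolve_right h, (mul_eq_zero.mp hc1).resolve_right h] at hx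

end IsAmple

theorem exists_mul_sub_mul_ne_zero {K : Type*} [Field K] [NeZero (2 : K)] (a : K) {c : K}
    (hc : c ≠ 0) : ∃ t : K, t * (a - c * t) ≠ 0 := by
  by_cases hac : a = c
  · refine ⟨2, ?_⟩
    rw [hac, show c - c * 2 = -c by ring]
    exact mul_ne_zero two_ne_zero (neg_ne_zero.mpr hc)
  · exact ⟨1, by simpa [sub_eq_zero] using hac⟩

theorem exists_gram_det_add_smul_ne_zero {W : Type*} [AddCommGroup W] [Module ℂ W]
    {β : W →ₗ[ℂ] W →ₗ[ℂ] ℂ} {r v p : W} (hrr : β r r = 0) (hrv : β r v = 0) (hvr : β v r = 0)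
    (hpp : β p p = 0) (hpr : β p r = β r p) (hpv : β p v = β v p) (hvp : β v p ≠ 0) :
    ∃ t : ℂ, β (r + t • p) (r + t • p) * β v v - β (r + t • p) v * β v (r + t • p) ≠ 0 := by
  obtain ⟨t, ht⟩ := exists_mul_sub_mul_ne_zero (2 * β r p * β v v) (pow_ne_zero 2 hvp)
  refine ⟨t, ?_⟩
  simp only [map_add, map_smul, LinearMap.add_apply, LinearMap.smul_apply, smul_eq_mul, hrr, hrv,
    hvr, hpp, hpr, hpv]
  convert ht using 1
  ring

/-- Proposition 6(C): let `β_Pf` be the bilinear form on `⋀²ℂ⁴` determined by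
`ω ∧ η = β_Pf(ω, η) • δ`. If `A : ℂ² → ⋀²ℂ⁴` is not ample with respect to `β_Pf` and
`w ∈ ℂ⁴` is nonzero, then `x ↦ A x + w ∧ B x` is ample for some `B : ℂ² → ℂ⁴`. -/
theorem not_ample_perturb_wedge_left
    (βPf : ExteriorAlgebra ℂ (Fin 4 → ℂ) →ₗ[ℂ] ExteriorAlgebra ℂ (Fin 4 → ℂ) →ₗ[ℂ] ℂ)
    (hβPf : ∀ ω η : ExteriorAlgebra ℂ (Fin 4 → ℂ),
      ω ∈ ⋀[ℂ]^2 (Fin 4 → ℂ) → η ∈ ⋀[ℂ]^2 (Fin 4 → ℂ) → ω * η = βPf ω η • delta4)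
    (A : (Fin 2 → ℂ) →ₗ[ℂ] ExteriorAlgebra ℂ (Fin 4 → ℂ))
    (hA2 : ∀ x, A x ∈ ⋀[ℂ]^2 (Fin 4 → ℂ))
    (hA : ¬ IsAmple βPf A)
    (w : Fin 4 → ℂ) (hw : w ≠ 0) :
    ∃ B : (Fin 2 → ℂ) →ₗ[ℂ] (Fin 4 → ℂ),
      IsAmple βPf (A + (LinearMap.mulLeft ℂ (ι ℂ w)) ∘ₗ ((ι ℂ) ∘ₗ B)) := by
  have hβ : IsPfaffPairing βPf := hβPf
  have hsymm : ∀ x y, βPf (A x) (A y) = βPf (A y) (A x) := fun x y => hβ.apply_comm (hA2 x) (hA2 y)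
  obtain ⟨x₀, z, hx₀, hrad, hz⟩ := exists_radical_anisotropic_of_not_isAmple hsymm hA
  let b := basisOfLinearIndependentOfCardEqFinrank
    (linearIndependent_of_radical_anisotropic hx₀ hrad hz) (by simp)
  obtain ⟨u, hu⟩ := hβ.exists_apply_ι_mul_ι_ne_zero hw (hA2 z) hz
  have hwu := ι_mul_ι_mem_exteriorPower_two (R := ℂ) w u
  obtain ⟨t, ht⟩ := exists_gram_det_add_smul_ne_zero (hrad x₀) (hrad z) ((hsymm z x₀).trans (hrad z))
    (hβ.apply_ι_mul_ι_self w u) (hβ.apply_comm hwu (hA2 x₀)) (hβ.apply_comm hwu (hA2 z)) hu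
  refine ⟨(b.coord 0).smulRight (t • u), isAmple_of_gram_det_ne_zero b ?_⟩
  have hb0 : b 0 = x₀ := by simp [b]
  have hb1 : b 1 = z := by simp [b]
  simp only [LinearMap.add_apply, LinearMap.comp_apply, LinearMap.smulRight_apply,
    LinearMap.mulLeft_apply, Module.Basis.coord_apply, Module.Basis.repr_self, map_smul]
  simpa [hb0, hb1] using ht
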